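/- In the majority protocol, in every reachable configuration Cᵢ of a fair execution from an initial configuration, the invariant #Q_Y(Cᵢ) − #Q_N(Cᵢ) = #Q_M(Cᵢ) − #Q_m(Cᵢ) holds, where Q_Y, Q_N are the states with majority value Y, N respectively, Q_M the states in the majority group (grp = true), and Q_m its complement. -/
import Mathlib


/-- A transition set: `((p,q), s, (p',q'))` where `s = true` encodes the data
comparison `=` and `s = false` encodes `≠`. -/
abbrev PTrans (Q : Type*) := Set ((Q × Q) × Bool × (Q × Q))

/-- The configuration with a single agent of datum `d` in state `q`. -/
noncomputable def sing {D Q : Type*} (d : D) (q : Q) : D →₀ (Q →₀ ℕ) :=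
  Finsupp.single d (Finsupp.single q 1)

/-- One step of a population protocol with unordered data. -/
def Step {D Q : Type*} (δ : PTrans Q) (C C' : D →₀ (Q →₀ ℕ)) : Prop :=
  ∃ (p q p' q' : Q) (s : Bool) (d e : D),
    ((p, q), s, (p', q')) ∈ δ ∧ (if s then d = e else d ≠ e) ∧
    sing d p + sing e q ≤ C ∧
    C' = C - (sing d p + sing e q) + (sing d p' + sing e q')

/-- Reachability: reflexive-transitive closure of the step relation. -/
def Reach {D Q : Type*} (δ : PTrans Q) : (D →₀ (Q →₀ ℕ)) → (D →₀ (Q →₀ ℕ)) → Prop :=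
  Relation.ReflTransGen (Step δ)

/-- The embedding order on configurations. -/
def Embeds {D Q : Type*} (C C' : D →₀ (Q →₀ ℕ)) : Prop :=
  ∃ ρ : D ↪ D, ∀ d, C d ≤ C' (ρ d)

/-- An execution of the protocol. -/
def IsExec {D Q : Type*} (δ : PTrans Q) (e : ℕ → (D →₀ (Q →₀ ℕ))) : Prop :=
  ∀ i, Step δ (e i) (e (i + 1))

/-- Fairness: any configuration reachable from infinitely many configurations of the
execution occurs infinitely often along the execution. -/
def Fair {D Q : Type*} (δ : PTrans Q) (e : ℕ → (D →₀ (Q →₀ ℕ))) : Prop :=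
  ∀ C', {i | Reach δ (e i) C'}.Infinite → {i | e i = C'}.Infinite

/-- The execution converges to the output value given by the proposition `P`
(`true` if `P` holds, `false` otherwise): from some point on, every agent's state
has that output. -/
def Converges {D Q : Type*} (O : Q → Bool) (e : ℕ → (D →₀ (Q →₀ ℕ))) (P : Prop) : Prop :=
  ∃ τ, ∀ i, τ ≤ i → ∀ d q, 0 < e i d q → (O q = true ↔ P)


/-- The majority values of the majority protocol. -/
inductive MajVal | Y | N | Ybar | Nbar | y | n
deriving DecidableEq

/-- A state of the majority protocol: the macros `pair`, `grp`, `even` and `maj`. -/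
structure MajState where
  pair : Bool
  grp : Bool
  even : Bool
  maj : MajVal
deriving DecidableEq

open MajVal in
/-- The transitions of the majority protocol: rules (1)–(14), together with the
implicit identity transitions.  The Boolean `s` in `((p,q),s,(p',q'))` is `true` for
the color precondition `d₁ = d₂` and `false` for `d₁ ≠ d₂`. -/
def MajRule : ((MajState × MajState) × Bool × (MajState × MajState)) → Prop :=
  fun t =>
  let p := t.1.1; let q := t.1.2; let s := t.2.1; let p' := t.2.2.1; let q' := t.2.2.2
  -- implicit identity transitions
  (p' = p ∧ q' = q) ∨
  -- (1) pairing
  (s = false ∧ p.pair = false ∧ q.pair = false ∧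
    p' = { p with pair := true, even := true } ∧
    q' = { q with pair := true, even := true }) ∨
  -- (2)
  (s = false ∧ p.pair = false ∧ q.pair = true ∧ q.grp = true ∧ q.maj = Y ∧
    p' = p ∧ q' = { q with grp := false, maj := N }) ∨
  -- (3)
  (s = true ∧ p.pair = false ∧ q.pair = true ∧ q.grp = false ∧ q.maj = N ∧
    p' = p ∧ q' = { q with grp := true, maj := Y }) ∨
  -- (4)
  (s = false ∧ p.pair = false ∧ q.pair = true ∧ q.grp = true ∧ (q.maj = y ∨ q.maj = n) ∧
    p' = p ∧ q' = { q with maj := Nbar }) ∨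
  -- (5)
  (s = true ∧ p.pair = false ∧ q.pair = true ∧ q.grp = false ∧ (q.maj = y ∨ q.maj = n) ∧
    p' = p ∧ q' = { q with maj := Ybar }) ∨
  -- (6)
  (p.grp = true ∧ p.maj = Nbar ∧ q.grp = false ∧ (q.maj = y ∨ q.maj = n) ∧
    p' = { p with grp := false, maj := N } ∧ q' = { q with maj := N }) ∨
  -- (7)
  (p.grp = false ∧ p.maj = Ybar ∧ q.grp = true ∧ (q.maj = y ∨ q.maj = n) ∧
    p' = { p with grp := true, maj := Y } ∧ q' = { q with maj := Y }) ∨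
  -- (8)
  (p.grp = true ∧ p.maj = Nbar ∧ q.grp = false ∧ q.maj = Ybar ∧
    p' = { p with grp := false, maj := n } ∧ q' = { q with grp := true, maj := n }) ∨
  -- (9)
  (p.pair = false ∧ q.even = true ∧ p' = p ∧ q' = { q with even := false }) ∨
  -- (10)
  (p.pair = true ∧ p.even = true ∧ q.pair = true ∧ q.even = false ∧
    p' = p ∧ q' = { q with even := true }) ∨
  -- (11)
  (p.maj = Y ∧ q.maj = N ∧ p' = { p with maj := n } ∧ q' = { q with maj := n }) ∨
  -- (12)
  (p.maj = Y ∧ q.maj = n ∧ p' = p ∧ q' = { q with maj := y }) ∨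
  -- (13)
  (p.maj = N ∧ q.maj = y ∧ p' = p ∧ q' = { q with maj := n }) ∨
  -- (14)
  (p.maj = n ∧ q.maj = y ∧ p' = p ∧ q' = { q with maj := n })

/-- The transition set of the majority protocol. -/
def majDelta : PTrans MajState := {t | MajRule t}

/-- The unique initial state of the majority protocol:
unpaired, in the majority group, even bit false, majority value `Y`. -/
def majInit : MajState := ⟨false, true, false, MajVal.Y⟩

/-- The number of agents of `C` whose state satisfies `S`. -/
noncomputable def cardB {D Q : Type*} (S : Q → Bool) (C : D →₀ (Q →₀ ℕ)) : ℕ :=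
  C.sum fun _ f => f.sum fun q c => if S q then c else 0


open MajVal in
noncomputable def gg (q : MajState) : ℤ :=
  (if q.maj = Y then 1 else 0) - (if q.maj = N then 1 else 0)
    - (if q.grp then 1 else 0) + (if q.grp then 0 else 1)

lemma rule_gg {p q p' q' : MajState} {s : Bool}
    (h : MajRule ((p, q), s, (p', q'))) : gg p' + gg q' = gg p + gg q := by
  unfold MajRule at h
  simp only at h
  rcases h with ⟨rfl, rfl⟩ | ⟨-, -, -, rfl, rfl⟩ | ⟨-, -, -, hg, hm, rfl, rfl⟩ |
    ⟨-, -, -, hg, hm, rfl, rfl⟩ | ⟨-, -, -, hg, hm|hm, rfl, rfl⟩ |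
    ⟨-, -, -, hg, hm|hm, rfl, rfl⟩ | ⟨h1, h2, h3, hm|hm, rfl, rfl⟩ |
    ⟨h1, h2, h3, hm|hm, rfl, rfl⟩ | ⟨h1, h2, h3, h4, rfl, rfl⟩ |
    ⟨-, -, rfl, rfl⟩ | ⟨-, -, -, -, rfl, rfl⟩ | ⟨h1, h2, rfl, rfl⟩ |
    ⟨h1, h2, rfl, rfl⟩ | ⟨h1, h2, rfl, rfl⟩ | ⟨h1, h2, rfl, rfl⟩ <;>
  simp [gg, *] <;> ring

lemma cardB_add {D Q : Type*} (S : Q → Bool) (A B : D →₀ (Q →₀ ℕ)) :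
    cardB S (A + B) = cardB S A + cardB S B := by
  unfold cardB
  rw [Finsupp.sum_add_index']
  · intro d; simp
  · intro d f g
    rw [Finsupp.sum_add_index']
    · intro q; simp
    · intro q a b; split <;> simp

lemma cardB_sub_add {D Q : Type*} (S : Q → Bool) {X C : D →₀ (Q →₀ ℕ)} (h : X ≤ C) :
    cardB S C = cardB S (C - X) + cardB S X := by
  have hc : C - X + X = C := by
    ext d q
    have h1 : X d q ≤ C d q := Finsupp.le_def.mp (Finsupp.le_def.mp h d) q
    simp [Finsupp.sub_apply, Finsupp.add_apply]
    omega
  conv_lhs => rw [← hc]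
  exact cardB_add S _ _

lemma cardB_sing {D Q : Type*} (S : Q → Bool) (d : D) (p : Q) :
    cardB S (sing d p) = if S p then 1 else 0 := by
  unfold cardB sing
  rw [Finsupp.sum_single_index, Finsupp.sum_single_index]
  · split <;> simp
  · simp

lemma step_card {D Q : Type*} {C C' : D →₀ (Q →₀ ℕ)}
    {p q p' q' : Q} {d e : D}
    (hle : sing d p + sing e q ≤ C)
    (hC' : C' = C - (sing d p + sing e q) + (sing d p' + sing e q'))
    (S : Q → Bool) :
    (cardB S C' : ℤ) = (cardB S C : ℤ)
      - (if S p then 1 else 0) - (if S q then 1 else 0)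
      + (if S p' then 1 else 0) + (if S q' then 1 else 0) := by
  have h1 : cardB S C' = cardB S (C - (sing d p + sing e q))
      + ((if S p' then 1 else 0) + (if S q' then 1 else 0)) := by
    rw [hC', cardB_add, cardB_add, cardB_sing, cardB_sing]
  have h2 : cardB S C = cardB S (C - (sing d p + sing e q))
      + ((if S p then 1 else 0) + (if S q then 1 else 0)) := by
    rw [cardB_sub_add S hle, cardB_add, cardB_sing, cardB_sing]
  rw [h1, h2]
  push_cast
  split_ifs <;> ring

lemma cardB_congr {D Q : Type*} {S S' : Q → Bool} (C : D →₀ (Q →₀ ℕ))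
    (h : ∀ d q, 0 < C d q → S q = S' q) : cardB S C = cardB S' C := by
  unfold cardB
  apply Finsupp.sum_congr
  intro d _
  apply Finsupp.sum_congr
  intro q hq
  rw [h d q (Nat.pos_of_ne_zero (Finsupp.mem_support_iff.mp hq))]

open MajVal in
/-- In every configuration of a fair execution of the majority protocol from an
initial configuration, `#Q_Y − #Q_N = #Q_M − #Q_m`. -/
theorem maj_invariant {D : Type*} (e : ℕ → (D →₀ (MajState →₀ ℕ)))
    (h0 : ∀ d q, 0 < e 0 d q → q = majInit)
    (hexec : IsExec majDelta e) (hfair : Fair majDelta e) (i : ℕ) :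
    (cardB (fun q => decide (q.maj = Y)) (e i) : ℤ) -
      (cardB (fun q => decide (q.maj = N)) (e i) : ℤ) =
    (cardB (fun q => q.grp) (e i) : ℤ) -
      (cardB (fun q => ! q.grp) (e i) : ℤ) := by
  induction i with
  | zero =>
    have h1 : cardB (fun q => decide (q.maj = Y)) (e 0) = cardB (fun q => q.grp) (e 0) := by
      apply cardB_congr
      intro d q hq
      rw [h0 d q hq]; rfl
    have h2 : cardB (fun q => decide (q.maj = N)) (e 0) = cardB (fun q => ! q.grp) (e 0) := by
      apply cardB_congr
      intro d q hq
      rw [h0 d q hq]; rfl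
    rw [h1, h2]
  | succ i ih =>
    obtain ⟨p, q, p', q', s, d, e', hrule, hcond, hle, hC'⟩ := hexec i
    have hgg := rule_gg hrule
    have hY := step_card hle hC' (fun q => decide (q.maj = MajVal.Y))
    have hN := step_card hle hC' (fun q => decide (q.maj = MajVal.N))
    have hG := step_card hle hC' (fun q => q.grp)
    have hNG := step_card hle hC' (fun q => ! q.grp)
    have key : ∀ r : MajState, gg r =
        (if (fun q => decide (q.maj = MajVal.Y)) r then (1:ℤ) else 0)
        - (if (fun q => decide (q.maj = MajVal.N)) r then 1 else 0)
        - (if (fun q : MajState => q.grp) r then 1 else 0)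
        + (if (fun q : MajState => ! q.grp) r then 1 else 0) := by
      intro r
      unfold gg
      cases hg : r.grp <;> simp [hg]
    rw [key, key, key, key] at hgg
    simp only at hY hN hG hNG hgg
    rw [hY, hN, hG, hNG]
    linarith [ih, hgg]
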